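/- Let W : Ω × ℝ^d × ℝ^{d×N} → [0,∞) be continuous, satisfying (1/C)|ξ| - C ≤ W(x,u,ξ) ≤ C(1+|ξ|) and the recession estimate: there exist α ∈ (0,1), C, L > 0 with |W^∞(x,u,ξ) - W(x,u,tξ)/t| ≤ C|ξ|^{1-α}/t^α whenever t|ξ| > L. Then for every (x,u,ξ), the quasiconvex envelope of the recession function equals the recession function of the quasiconvex envelope: Q(W^∞)(x,u,ξ) = (QW)^∞(x,u,ξ). -/

import Mathlib

open MeasureTheory Filter Set

noncomputable section

/-- The open unit cube `Q = (0,1)^N` in `ℝ^N`. -/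
def unitCube (N : ℕ) : Set (Fin N → ℝ) := Set.univ.pi fun _ => Set.Ioo (0:ℝ) 1

/-- The gradient matrix `∇φ(y) ∈ ℝ^{d×N}` of `φ : ℝ^N → ℝ^d`. -/
def gradMat {N d : ℕ} (φ : (Fin N → ℝ) → (Fin d → ℝ)) (y : Fin N → ℝ) :
    Fin d → Fin N → ℝ := fun i j => fderiv ℝ φ y (Pi.single j 1) i

/-- Test functions in `W_0^{1,∞}(Q;ℝ^d)`: Lipschitz maps vanishing outside the unit cube. -/
def TestFun {N d : ℕ} (φ : (Fin N → ℝ) → (Fin d → ℝ)) : Prop :=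
  (∃ K, LipschitzWith K φ) ∧ ∀ y ∉ unitCube N, φ y = 0

/-- Quasiconvex envelope (quasiconvexification) of `h` computed over the unit cube. -/
def qcEnv {N d : ℕ} (h : (Fin d → Fin N → ℝ) → ℝ) (ξ : Fin d → Fin N → ℝ) : ℝ :=
  sInf {r | ∃ φ, TestFun φ ∧ r = ∫ y in unitCube N, h (ξ + gradMat φ y)}

/-- Recession function: `h^∞(ξ) = limsup_{t→∞} h(tξ)/t`. -/
def recFn {N d : ℕ} (h : (Fin d → Fin N → ℝ) → ℝ) (ξ : Fin d → Fin N → ℝ) : ℝ :=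
  Filter.limsup (fun t : ℝ => h (t • ξ) / t) Filter.atTop

/-- Quasiconvexity in the sense of Morrey: for some bounded open set `D` of positive
measure, `h(ξ) ≤ (1/|D|) ∫_D h(ξ + ∇φ)` for all Lipschitz `φ` vanishing outside `D`. -/
def MorreyQC {N d : ℕ} (h : (Fin d → Fin N → ℝ) → ℝ) : Prop :=
  ∃ D : Set (Fin N → ℝ), IsOpen D ∧ Bornology.IsBounded D ∧ 0 < volume D ∧
    ∀ (ξ : Fin d → Fin N → ℝ) (φ : (Fin N → ℝ) → Fin d → ℝ),
      (∃ K, LipschitzWith K φ) → (∀ y ∉ D, φ y = 0) →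
      h ξ ≤ ((volume D).toReal)⁻¹ * ∫ y in D, h (ξ + gradMat φ y)

/-- A modulus of continuity. -/
def Modulus (ω : ℝ → ℝ) : Prop := Continuous ω ∧ ω 0 = 0 ∧ ∀ t, 0 ≤ ω t

/-- Convex envelope of `g : ℝ^m → ℝ`: pointwise supremum of convex minorants. -/
def convEnv {m : ℕ} (g : (Fin m → ℝ) → ℝ) (v : Fin m → ℝ) : ℝ :=
  sSup {r | ∃ h : (Fin m → ℝ) → ℝ, ConvexOn ℝ Set.univ h ∧ (∀ w, h w ≤ g w) ∧ r = h v}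

/-- Supremum of lower semicontinuous convex minorants (the biconjugate `g**`). -/
def biconj {m : ℕ} (g : (Fin m → ℝ) → ℝ) (v : Fin m → ℝ) : ℝ :=
  sSup {r | ∃ h : (Fin m → ℝ) → ℝ, ConvexOn ℝ Set.univ h ∧ LowerSemicontinuous h ∧
    (∀ w, h w ≤ g w) ∧ r = h v}

/-- Quasiconvex-convex envelope of `f(ξ,v)` over the unit cube. -/
def qcxcEnv {N d m : ℕ} (f : (Fin d → Fin N → ℝ) → (Fin m → ℝ) → ℝ)
    (ξ : Fin d → Fin N → ℝ) (v : Fin m → ℝ) : ℝ :=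
  sInf {r | ∃ (ψ : (Fin N → ℝ) → Fin d → ℝ) (η : (Fin N → ℝ) → Fin m → ℝ),
    TestFun ψ ∧ Measurable η ∧ (∃ M, ∀ y, ‖η y‖ ≤ M) ∧
    (∫ y in unitCube N, η y) = 0 ∧
    r = ∫ y in unitCube N, f (ξ + gradMat ψ y) (v + η y)}



/-! Write `h_t(ζ) = h(tζ)/t`. Rescaling test functions gives `(Qh)(tξ)/t = Q(h_t)(ξ)`.
The recession estimate yields `|h_t - h^∞| ≤ ε_t (1 + |ζ|)` with `ε_t = O(t^{-α})`, and
coercivity bounds `1 + |ζ|` by the integrands themselves, so that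
`Q(h_t) ≤ (1 + C ε_t) Q(h^∞) + O(ε_t)` and symmetrically. Hence `Q(h_t)(ξ) → Q(h^∞)(ξ)`, and the
limsup defining `(Qh)^∞(ξ)` is this limit. -/

open scoped Topology

variable {N d : ℕ}

section UnitCube

lemma measurableSet_unitCube : MeasurableSet (unitCube N) :=
  MeasurableSet.univ_pi fun _ => measurableSet_Ioo

lemma volume_unitCube : volume (unitCube N) = 1 := by
  simp [unitCube, volume_pi_pi, Real.volume_Ioo]

lemma setIntegral_unitCube_const (c : ℝ) : ∫ _ in unitCube N, c = c := by
  simp [measureReal_def, volume_unitCube]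

lemma integrableOn_unitCube_const (c : ℝ) : IntegrableOn (fun _ => c) (unitCube N) :=
  integrableOn_const (by simp [volume_unitCube])

end UnitCube

section GradMat

lemma measurable_gradMat (φ : (Fin N → ℝ) → Fin d → ℝ) : Measurable (gradMat φ) :=
  measurable_pi_lambda _ fun i => measurable_pi_lambda _ fun j =>
    (measurable_pi_apply i).comp (measurable_fderiv_apply_const ℝ φ (Pi.single j 1))

lemma norm_gradMat_le {φ : (Fin N → ℝ) → Fin d → ℝ} {K : NNReal} (hφ : LipschitzWith K φ)
    (y : Fin N → ℝ) : ‖gradMat φ y‖ ≤ K := by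
  refine (pi_norm_le_iff_of_nonneg K.coe_nonneg).2 fun i =>
    (pi_norm_le_iff_of_nonneg K.coe_nonneg).2 fun j => ?_
  calc ‖fderiv ℝ φ y (Pi.single j 1) i‖ ≤ ‖fderiv ℝ φ y (Pi.single j 1)‖ := norm_le_pi_norm _ i
    _ ≤ ‖fderiv ℝ φ y‖ * ‖(Pi.single j 1 : Fin N → ℝ)‖ := (fderiv ℝ φ y).le_opNorm _
    _ ≤ K := by simpa [Pi.norm_single] using norm_fderiv_le_of_lipschitz ℝ hφ

lemma gradMat_zero : gradMat (fun _ : Fin N → ℝ => (0 : Fin d → ℝ)) = 0 := by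
  ext y i j
  simp [gradMat]

lemma gradMat_const_smul (c : ℝ) (φ : (Fin N → ℝ) → Fin d → ℝ) :
    gradMat (c • φ) = c • gradMat φ := by
  ext y i j
  simp [gradMat, fderiv_const_smul_field]

lemma testFun_zero : TestFun (fun _ : Fin N → ℝ => (0 : Fin d → ℝ)) :=
  ⟨⟨0, LipschitzWith.const' 0⟩, fun _ _ => rfl⟩

lemma TestFun.const_smul {φ : (Fin N → ℝ) → Fin d → ℝ} (hφ : TestFun φ) (c : ℝ) :
    TestFun (c • φ) := by
  obtain ⟨⟨K, hK⟩, hzero⟩ := hφ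
  exact ⟨⟨‖c‖₊ * K, (lipschitzWith_smul c).comp hK⟩, fun y hy => by simp [hzero y hy]⟩

end GradMat

section Growth

variable {E : Type*} [NormedAddCommGroup E] {C t : ℝ} {G h : E → ℝ}

structure StdGrowth (C : ℝ) (G : E → ℝ) : Prop where
  nonneg : ∀ ζ, 0 ≤ G ζ
  lower : ∀ ζ, 1 / C * ‖ζ‖ - C ≤ G ζ
  upper : ∀ ζ, G ζ ≤ C * (1 + ‖ζ‖)

namespace StdGrowth

lemma const_nonneg (hG : StdGrowth C G) : 0 ≤ C := by
  simpa using (hG.nonneg 0).trans (hG.upper 0)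

lemma norm_le (hG : StdGrowth C G) (ζ : E) : ‖G ζ‖ ≤ C * (1 + ‖ζ‖) := by
  rw [Real.norm_of_nonneg (hG.nonneg ζ)]
  exact hG.upper ζ

lemma one_add_norm_le (hG : StdGrowth C G) (hC : 0 < C) (ζ : E) :
    1 + ‖ζ‖ ≤ C * G ζ + (1 + C ^ 2) := by
  have hlow := mul_le_mul_of_nonneg_left (hG.lower ζ) hC.le
  rw [mul_sub, ← mul_assoc, mul_one_div_cancel hC.ne', one_mul] at hlow
  linarith

lemma of_tendsto {ι : Type*} {l : Filter ι} [l.NeBot] {F : ι → E → ℝ}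
    (hF : ∀ᶠ i in l, StdGrowth C (F i)) (hlim : ∀ ζ, Tendsto (fun i => F i ζ) l (𝓝 (G ζ))) :
    StdGrowth C G where
  nonneg ζ := ge_of_tendsto (hlim ζ) (hF.mono fun _ hi => hi.nonneg ζ)
  lower ζ := ge_of_tendsto (hlim ζ) (hF.mono fun _ hi => hi.lower ζ)
  upper ζ := le_of_tendsto (hlim ζ) (hF.mono fun _ hi => hi.upper ζ)

end StdGrowth

variable [NormedSpace ℝ E]

def rescale (h : E → ℝ) (t : ℝ) (ζ : E) : ℝ := h (t • ζ) / t

lemma Continuous.rescale (hh : Continuous h) (t : ℝ) : Continuous (rescale h t) :=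
  (hh.comp (continuous_const_smul t)).div_const t

lemma StdGrowth.rescale (hG : StdGrowth C G) (ht : 1 ≤ t) : StdGrowth C (rescale G t) := by
  have ht₀ : 0 < t := one_pos.trans_le ht
  have hCt : 0 ≤ C * (t - 1) := mul_nonneg hG.const_nonneg (sub_nonneg.2 ht)
  have hnorm (ζ : E) : ‖t • ζ‖ = t * ‖ζ‖ := by rw [norm_smul, Real.norm_of_nonneg ht₀.le]
  refine ⟨fun ζ => div_nonneg (hG.nonneg _) ht₀.le, fun ζ => ?_, fun ζ => ?_⟩
  · have hlow := hG.lower (t • ζ)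
    rw [hnorm] at hlow
    rw [_root_.rescale, le_div_iff₀ ht₀]
    nlinarith
  · have hup := hG.upper (t • ζ)
    rw [hnorm] at hup
    rw [_root_.rescale, div_le_iff₀ ht₀]
    nlinarith

lemma le_mul_norm_of_tendsto_rescale (hup : ∀ ζ, h ζ ≤ C * (1 + ‖ζ‖)) {ζ : E} {l : ℝ}
    (hlim : Tendsto (fun t => rescale h t ζ) atTop (𝓝 l)) : l ≤ C * ‖ζ‖ := by
  have hbound : Tendsto (fun t : ℝ => C / t + C * ‖ζ‖) atTop (𝓝 (C * ‖ζ‖)) := by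
    simpa using (tendsto_const_nhds.div_atTop tendsto_id).add_const (C * ‖ζ‖)
  refine le_of_tendsto_of_tendsto hlim hbound ?_
  filter_upwards [eventually_gt_atTop 0] with t ht
  have hupt := hup (t • ζ)
  rw [norm_smul, Real.norm_of_nonneg ht.le] at hupt
  calc rescale h t ζ ≤ C * (1 + t * ‖ζ‖) / t := div_le_div_of_nonneg_right hupt ht.le
    _ = C / t + C * ‖ζ‖ := by field_simp

end Growth

section QcEnv

open scoped Pointwise

variable {C : ℝ} {G G₁ G₂ : (Fin d → Fin N → ℝ) → ℝ}

def qcEnergies (G : (Fin d → Fin N → ℝ) → ℝ) (ξ : Fin d → Fin N → ℝ) : Set ℝ :=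
  {r | ∃ φ, TestFun φ ∧ r = ∫ y in unitCube N, G (ξ + gradMat φ y)}

lemma qcEnv_eq_sInf_qcEnergies (G : (Fin d → Fin N → ℝ) → ℝ) (ξ : Fin d → Fin N → ℝ) :
    qcEnv G ξ = sInf (qcEnergies G ξ) := rfl

lemma self_mem_qcEnergies (G : (Fin d → Fin N → ℝ) → ℝ) (ξ : Fin d → Fin N → ℝ) :
    G ξ ∈ qcEnergies G ξ :=
  ⟨_, testFun_zero, by simp [gradMat_zero, measureReal_def, volume_unitCube]⟩

lemma bddBelow_qcEnergies (hG : ∀ ζ, 0 ≤ G ζ) (ξ : Fin d → Fin N → ℝ) :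
    BddBelow (qcEnergies G ξ) :=
  ⟨0, by rintro _ ⟨φ, -, rfl⟩; exact setIntegral_nonneg measurableSet_unitCube fun y _ => hG _⟩

lemma qcEnv_le_integral (hG : ∀ ζ, 0 ≤ G ζ) {φ : (Fin N → ℝ) → Fin d → ℝ} (hφ : TestFun φ)
    (ξ : Fin d → Fin N → ℝ) : qcEnv G ξ ≤ ∫ y in unitCube N, G (ξ + gradMat φ y) :=
  csInf_le (bddBelow_qcEnergies hG ξ) ⟨φ, hφ, rfl⟩

lemma qcEnv_le_self (hG : ∀ ζ, 0 ≤ G ζ) (ξ : Fin d → Fin N → ℝ) : qcEnv G ξ ≤ G ξ :=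
  csInf_le (bddBelow_qcEnergies hG ξ) (self_mem_qcEnergies G ξ)

lemma integrableOn_comp_gradMat (hG : Measurable G) {a : ℝ}
    (hGa : ∀ ζ, ‖G ζ‖ ≤ a * (1 + ‖ζ‖)) {φ : (Fin N → ℝ) → Fin d → ℝ} (hφ : TestFun φ)
    (ξ : Fin d → Fin N → ℝ) : IntegrableOn (fun y => G (ξ + gradMat φ y)) (unitCube N) := by
  obtain ⟨⟨K, hK⟩, -⟩ := hφ
  have ha : 0 ≤ a := by simpa using (norm_nonneg _).trans (hGa 0)
  refine Integrable.mono' (integrableOn_unitCube_const (a * (1 + (‖ξ‖ + K))))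
    (hG.comp (measurable_const.add (measurable_gradMat φ))).aestronglyMeasurable
    (ae_of_all _ fun y => (hGa _).trans ?_)
  gcongr
  exact (norm_add_le _ _).trans (by gcongr; exact norm_gradMat_le hK y)

lemma qcEnv_le_mul_qcEnv_add (hG₁ : ∀ ζ, 0 ≤ G₁ ζ) (hG₂ : ∀ ζ, 0 ≤ G₂ ζ)
    (hm₂ : Measurable G₂) {a : ℝ} (hG₂a : ∀ ζ, ‖G₂ ζ‖ ≤ a * (1 + ‖ζ‖)) {k b : ℝ} (hk : 0 ≤ k)
    (hle : ∀ ζ, G₁ ζ ≤ k * G₂ ζ + b) (ξ : Fin d → Fin N → ℝ) :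
    qcEnv G₁ ξ ≤ k * qcEnv G₂ ξ + b := by
  have hmono : Monotone fun r : ℝ => k * r + b := fun _ _ hrs => by dsimp only; gcongr
  have hne : (qcEnergies G₂ ξ).Nonempty := ⟨_, self_mem_qcEnergies G₂ ξ⟩
  rw [qcEnv_eq_sInf_qcEnergies G₂, hmono.map_csInf_of_continuousAt (by fun_prop) hne
    (bddBelow_qcEnergies hG₂ ξ)]
  refine le_csInf (hne.image _) ?_
  rintro _ ⟨_, ⟨φ, hφ, rfl⟩, rfl⟩
  have hint := (integrableOn_comp_gradMat hm₂ hG₂a hφ ξ).const_mul k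
  calc qcEnv G₁ ξ ≤ ∫ y in unitCube N, G₁ (ξ + gradMat φ y) := qcEnv_le_integral hG₁ hφ ξ
    _ ≤ ∫ y in unitCube N, (k * G₂ (ξ + gradMat φ y) + b) :=
        integral_mono_of_nonneg (ae_of_all _ fun _ => hG₁ _)
          (hint.add (integrableOn_unitCube_const b)) (ae_of_all _ fun _ => hle _)
    _ = k * (∫ y in unitCube N, G₂ (ξ + gradMat φ y)) + b := by
        rw [integral_add hint (integrableOn_unitCube_const b), integral_const_mul,
          setIntegral_unitCube_const]

lemma qcEnv_sub_qcEnv_le (hC : 0 < C) (hG₁ : ∀ ζ, 0 ≤ G₁ ζ) (hG₂ : StdGrowth C G₂)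
    (hm₂ : Measurable G₂) {ε : ℝ} (hε : 0 ≤ ε) (hle : ∀ ζ, G₁ ζ ≤ G₂ ζ + ε * (1 + ‖ζ‖))
    (ξ : Fin d → Fin N → ℝ) :
    qcEnv G₁ ξ - qcEnv G₂ ξ ≤ ε * (C ^ 2 * (1 + ‖ξ‖) + (1 + C ^ 2)) := by
  have hle' (ζ : Fin d → Fin N → ℝ) : G₁ ζ ≤ (1 + ε * C) * G₂ ζ + ε * (1 + C ^ 2) := by
    nlinarith [hle ζ, mul_le_mul_of_nonneg_left (hG₂.one_add_norm_le hC ζ) hε]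
  have hq₁ := qcEnv_le_mul_qcEnv_add hG₁ hG₂.nonneg hm₂ hG₂.norm_le (by positivity) hle' ξ
  have hq₂ : qcEnv G₂ ξ ≤ C * (1 + ‖ξ‖) := (qcEnv_le_self hG₂.nonneg ξ).trans (hG₂.upper ξ)
  nlinarith [mul_le_mul_of_nonneg_left hq₂ (mul_nonneg hε hC.le)]

lemma abs_qcEnv_sub_qcEnv_le (hC : 0 < C) (hG₁ : StdGrowth C G₁) (hm₁ : Measurable G₁)
    (hG₂ : StdGrowth C G₂) (hm₂ : Measurable G₂) {ε : ℝ} (hε : 0 ≤ ε)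
    (hdiff : ∀ ζ, |G₁ ζ - G₂ ζ| ≤ ε * (1 + ‖ζ‖)) (ξ : Fin d → Fin N → ℝ) :
    |qcEnv G₁ ξ - qcEnv G₂ ξ| ≤ ε * (C ^ 2 * (1 + ‖ξ‖) + (1 + C ^ 2)) :=
  abs_sub_le_iff.2
    ⟨qcEnv_sub_qcEnv_le hC hG₁.nonneg hG₂ hm₂ hε (fun ζ => by linarith [(abs_le.1 (hdiff ζ)).2]) ξ,
      qcEnv_sub_qcEnv_le hC hG₂.nonneg hG₁ hm₁ hε (fun ζ => by linarith [(abs_le.1 (hdiff ζ)).1]) ξ⟩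

lemma tendsto_qcEnv {ι : Type*} {l : Filter ι} {F : ι → (Fin d → Fin N → ℝ) → ℝ} {ε : ι → ℝ}
    (hC : 0 < C) (hG : StdGrowth C G) (hm : Measurable G)
    (hF : ∀ᶠ i in l, StdGrowth C (F i) ∧ Measurable (F i) ∧ 0 ≤ ε i ∧
      ∀ ζ, |F i ζ - G ζ| ≤ ε i * (1 + ‖ζ‖))
    (hε : Tendsto ε l (𝓝 0)) (ξ : Fin d → Fin N → ℝ) :
    Tendsto (fun i => qcEnv (F i) ξ) l (𝓝 (qcEnv G ξ)) := by
  rw [tendsto_iff_dist_tendsto_zero]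
  refine squeeze_zero' (Eventually.of_forall fun _ => dist_nonneg) (hF.mono fun i hi => ?_)
    (by simpa using hε.mul_const (C ^ 2 * (1 + ‖ξ‖) + (1 + C ^ 2)))
  obtain ⟨hFi, hmi, hεi, hdiff⟩ := hi
  exact abs_qcEnv_sub_qcEnv_le hC hFi hmi hG hm hεi hdiff ξ

lemma qcEnergies_smul (h : (Fin d → Fin N → ℝ) → ℝ) {t : ℝ} (ht : t ≠ 0)
    (ξ : Fin d → Fin N → ℝ) : qcEnergies h (t • ξ) = t • qcEnergies (rescale h t) ξ := by
  have key (φ : (Fin N → ℝ) → Fin d → ℝ) : ∫ y in unitCube N, h (t • ξ + gradMat (t • φ) y) =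
      t * ∫ y in unitCube N, rescale h t (ξ + gradMat φ y) := by
    simp only [rescale, gradMat_const_smul, Pi.smul_apply, ← smul_add, integral_div,
      mul_div_cancel₀ _ ht]
  ext r
  simp only [qcEnergies, Set.mem_smul_set, smul_eq_mul]
  constructor
  · rintro ⟨φ, hφ, rfl⟩
    refine ⟨_, ⟨t⁻¹ • φ, hφ.const_smul _, rfl⟩, ?_⟩
    rw [← key, smul_smul, mul_inv_cancel₀ ht, one_smul]
  · rintro ⟨_, ⟨φ, hφ, rfl⟩, rfl⟩
    exact ⟨t • φ, hφ.const_smul t, (key φ).symm⟩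

lemma rescale_qcEnv (h : (Fin d → Fin N → ℝ) → ℝ) {t : ℝ} (ht : 0 < t) :
    rescale (qcEnv h) t = qcEnv (rescale h t) := by
  ext ξ
  rw [rescale, qcEnv_eq_sInf_qcEnergies, qcEnergies_smul h ht.ne', Real.sInf_smul_of_nonneg ht.le,
    smul_eq_mul, mul_div_cancel_left₀ _ ht.ne', qcEnv_eq_sInf_qcEnergies]

end QcEnv

section Recession

variable {C α L : ℝ} {h : (Fin d → Fin N → ℝ) → ℝ}

lemma rpow_le_one_add_self {x p : ℝ} (hx : 0 ≤ x) (hp₀ : 0 ≤ p) (hp₁ : p ≤ 1) :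
    x ^ p ≤ 1 + x := by
  rcases le_total x 1 with hx1 | hx1
  · linarith [Real.rpow_le_one hx hx1 hp₀]
  · calc x ^ p ≤ x ^ (1 : ℝ) := Real.rpow_le_rpow_of_exponent_le hx1 hp₁
      _ ≤ 1 + x := by rw [Real.rpow_one]; linarith

def RecessionEstimate (C α L : ℝ) (h : (Fin d → Fin N → ℝ) → ℝ) : Prop :=
  ∀ (ξ : Fin d → Fin N → ℝ) (t : ℝ), t * ‖ξ‖ > L →
    |recFn h ξ - h (t • ξ) / t| ≤ C * ‖ξ‖ ^ ((1:ℝ) - α) / t ^ α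

lemma tendsto_rescale_recFn (hα : 0 < α) (hrec : RecessionEstimate C α L h)
    (ζ : Fin d → Fin N → ℝ) : Tendsto (fun t => rescale h t ζ) atTop (𝓝 (recFn h ζ)) := by
  rcases eq_or_ne ζ 0 with rfl | hζ
  · have hzero : Tendsto (fun t => rescale h t 0) atTop (𝓝 0) := by
      simpa [rescale] using tendsto_const_nhds.div_atTop tendsto_id
    rwa [show recFn h 0 = 0 from hzero.limsup_eq]
  · have hζ' : 0 < ‖ζ‖ := norm_pos_iff.2 hζ
    rw [tendsto_iff_dist_tendsto_zero]
    refine squeeze_zero' (Eventually.of_forall fun _ => dist_nonneg) ?_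
      ((tendsto_const_nhds (x := C * ‖ζ‖ ^ ((1:ℝ) - α))).div_atTop (tendsto_rpow_atTop hα))
    filter_upwards [eventually_gt_atTop (L / ‖ζ‖)] with t ht
    rw [Real.dist_eq, abs_sub_comm]
    exact hrec ζ t ((div_lt_iff₀ hζ').1 ht)

lemma StdGrowth.recFn (hh : StdGrowth C h) (hα : 0 < α) (hrec : RecessionEstimate C α L h) :
    StdGrowth C (recFn h) :=
  StdGrowth.of_tendsto ((eventually_ge_atTop 1).mono fun _ ht => hh.rescale ht)
    (tendsto_rescale_recFn hα hrec)

lemma measurable_recFn (hh : Continuous h)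
    (hlim : ∀ ζ, Tendsto (fun t => rescale h t ζ) atTop (𝓝 (recFn h ζ))) :
    Measurable (recFn h) :=
  measurable_of_tendsto_metrizable' atTop (fun t => (hh.rescale t).measurable)
    (tendsto_pi_nhds.2 hlim)

lemma abs_rescale_sub_recFn_le (hh : StdGrowth C h) (hα₀ : 0 < α) (hα₁ : α ≤ 1) (hL : 0 ≤ L)
    (hrec : RecessionEstimate C α L h) {t : ℝ} (ht : 1 ≤ t) (ζ : Fin d → Fin N → ℝ) :
    |rescale h t ζ - recFn h ζ| ≤ C * (1 + L) / t ^ α * (1 + ‖ζ‖) := by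
  have ht₀ : 0 < t := one_pos.trans_le ht
  have hC := hh.const_nonneg
  have htα : 0 < t ^ α := Real.rpow_pos_of_pos ht₀ α
  rcases lt_or_ge L (t * ‖ζ‖) with hζ | hζ
  · rw [abs_sub_comm]
    calc |recFn h ζ - rescale h t ζ| ≤ C * ‖ζ‖ ^ ((1:ℝ) - α) / t ^ α := hrec ζ t hζ
      _ ≤ C * (1 + ‖ζ‖) / t ^ α := by
          gcongr
          exact rpow_le_one_add_self (norm_nonneg ζ) (by linarith) (by linarith)
      _ ≤ C * (1 + L) / t ^ α * (1 + ‖ζ‖) := by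
          rw [div_mul_eq_mul_div]
          refine div_le_div_of_nonneg_right ?_ htα.le
          nlinarith [mul_nonneg (mul_nonneg hC hL) (norm_nonneg ζ)]
  -- below the threshold `L` both terms are `O(1/t)` by the growth bounds alone
  · have hrecFn : recFn h ζ ≤ C * (1 + L) / t := by
      have hle := le_mul_norm_of_tendsto_rescale hh.upper (tendsto_rescale_recFn hα₀ hrec ζ)
      rw [le_div_iff₀ ht₀]
      nlinarith [mul_le_mul_of_nonneg_right hle ht₀.le, mul_le_mul_of_nonneg_left hζ hC]
    have hrescale : rescale h t ζ ≤ C * (1 + L) / t := by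
      have hup := hh.upper (t • ζ)
      rw [norm_smul, Real.norm_of_nonneg ht₀.le] at hup
      exact div_le_div_of_nonneg_right (by nlinarith [mul_le_mul_of_nonneg_left hζ hC]) ht₀.le
    calc |rescale h t ζ - recFn h ζ| ≤ C * (1 + L) / t :=
          abs_sub_le_of_nonneg_of_le ((hh.rescale ht).nonneg ζ) hrescale
            ((hh.recFn hα₀ hrec).nonneg ζ) hrecFn
      _ ≤ C * (1 + L) / t ^ α := by
          refine div_le_div_of_nonneg_left (by positivity) htα ?_
          simpa using Real.rpow_le_rpow_of_exponent_le ht hα₁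
      _ ≤ C * (1 + L) / t ^ α * (1 + ‖ζ‖) :=
          le_mul_of_one_le_right (by positivity) (by linarith [norm_nonneg ζ])

end Recession

theorem stmt8_general {N d : ℕ} (Ω : Set (Fin N → ℝ))
    (W : (Fin N → ℝ) → (Fin d → ℝ) → (Fin d → Fin N → ℝ) → ℝ)
    (hWcont : Continuous fun p : (Fin N → ℝ) × (Fin d → ℝ) × (Fin d → Fin N → ℝ) =>
      W p.1 p.2.1 p.2.2)
    (hWnonneg : ∀ x ∈ Ω, ∀ (u : Fin d → ℝ) (ξ : Fin d → Fin N → ℝ), 0 ≤ W x u ξ)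
    (C : ℝ) (hC : 0 < C)
    (hW : ∀ x ∈ Ω, ∀ (u : Fin d → ℝ) (ξ : Fin d → Fin N → ℝ),
      (1 / C) * ‖ξ‖ - C ≤ W x u ξ ∧ W x u ξ ≤ C * (1 + ‖ξ‖))
    (α L : ℝ) (hα : α ∈ Set.Ioo (0:ℝ) 1) (hL : 0 < L)
    (hrec : ∀ x ∈ Ω, ∀ (u : Fin d → ℝ) (ξ : Fin d → Fin N → ℝ), ∀ t : ℝ, t * ‖ξ‖ > L →
      |recFn (W x u) ξ - W x u (t • ξ) / t| ≤ C * ‖ξ‖ ^ ((1:ℝ) - α) / t ^ α) :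
    ∀ x ∈ Ω, ∀ (u : Fin d → ℝ) (ξ : Fin d → Fin N → ℝ),
      qcEnv (recFn (W x u)) ξ = recFn (qcEnv (W x u)) ξ := by
  intro x hx u ξ
  have hh : StdGrowth C (W x u) :=
    ⟨hWnonneg x hx u, fun ζ => (hW x hx u ζ).1, fun ζ => (hW x hx u ζ).2⟩
  have hcont : Continuous (W x u) := hWcont.comp (f := fun ζ => (x, u, ζ)) (by fun_prop)
  have hlim := tendsto_rescale_recFn hα.1 (hrec x hx u)
  have hqc : Tendsto (fun t => qcEnv (rescale (W x u) t) ξ) atTop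
      (𝓝 (qcEnv (recFn (W x u)) ξ)) :=
    tendsto_qcEnv hC (hh.recFn hα.1 (hrec x hx u)) (measurable_recFn hcont hlim)
      ((eventually_ge_atTop 1).mono fun t ht => ⟨hh.rescale ht, (hcont.rescale t).measurable,
        by positivity, abs_rescale_sub_recFn_le hh hα.1 hα.2.le hL.le (hrec x hx u) ht⟩)
      (tendsto_const_nhds.div_atTop (tendsto_rpow_atTop hα.1)) ξ
  refine (hqc.congr' ?_).limsup_eq.symm
  filter_upwards [eventually_gt_atTop 0] with t ht
  rw [← rescale_qcEnv _ ht]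
  rfl

theorem stmt8 {N d : ℕ} (Ω : Set (Fin N → ℝ)) (hΩo : IsOpen Ω) (hΩb : Bornology.IsBounded Ω)
    (W : (Fin N → ℝ) → (Fin d → ℝ) → (Fin d → Fin N → ℝ) → ℝ)
    (hWcont : Continuous fun p : (Fin N → ℝ) × (Fin d → ℝ) × (Fin d → Fin N → ℝ) =>
      W p.1 p.2.1 p.2.2)
    (hWnonneg : ∀ x ∈ Ω, ∀ (u : Fin d → ℝ) (ξ : Fin d → Fin N → ℝ), 0 ≤ W x u ξ)
    (C : ℝ) (hC : 0 < C)
    (hW : ∀ x ∈ Ω, ∀ (u : Fin d → ℝ) (ξ : Fin d → Fin N → ℝ),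
      (1 / C) * ‖ξ‖ - C ≤ W x u ξ ∧ W x u ξ ≤ C * (1 + ‖ξ‖))
    (α L : ℝ) (hα : α ∈ Set.Ioo (0:ℝ) 1) (hL : 0 < L)
    (hrec : ∀ x ∈ Ω, ∀ (u : Fin d → ℝ) (ξ : Fin d → Fin N → ℝ), ∀ t : ℝ, t * ‖ξ‖ > L →
      |recFn (W x u) ξ - W x u (t • ξ) / t| ≤ C * ‖ξ‖ ^ ((1:ℝ) - α) / t ^ α) :
    ∀ x ∈ Ω, ∀ (u : Fin d → ℝ) (ξ : Fin d → Fin N → ℝ),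
      qcEnv (recFn (W x u)) ξ = recFn (qcEnv (W x u)) ξ :=
  stmt8_general Ω W hWcont hWnonneg C hC hW α L hα hL hrec

end
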